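/- Let E be a field, V an E-vector space, n ≥ 1, and v, w ∈ V nonzero vectors. If the n-th symmetric powers coincide, i.e. v^{⊗n} = w^{⊗n} as elements of Sym^n V, then there exists ζ ∈ E with ζ^n = 1 and v = ζ·w. -/
import Mathlib


open scoped TensorProduct
open PiTensorProduct

variable (E : Type*) [Field E] (V : Type*) [AddCommGroup V] [Module E V] (n : ℕ)

/-- The submodule of relations defining the `n`-th symmetric power of `V` as a quotient of the
`n`-th tensor power: it is spanned by the differences of pure tensors of permuted families. -/
noncomputable def symRel : Submodule E (⨂[E] (_i : Fin n), V) :=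
  Submodule.span E {x | ∃ (v : Fin n → V) (σ : Equiv.Perm (Fin n)),
    x = PiTensorProduct.tprod E v - PiTensorProduct.tprod E (fun i => v (σ i))}

/-- The image of `v ⊗ ⋯ ⊗ v` (`n` factors) in the `n`-th symmetric power `Sym^n V`. -/
noncomputable def symPowElem (v : V) : (⨂[E] (_i : Fin n), V) ⧸ symRel E V n :=
  Submodule.Quotient.mk (PiTensorProduct.tprod E (fun _ : Fin n => v))

lemma key {E : Type*} [Field E] {V : Type*} [AddCommGroup V] [Module E V] {n : ℕ}
    {v w : V} (h : symPowElem E V n v = symPowElem E V n w) (φ : V →ₗ[E] E) :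
    (φ v) ^ n = (φ w) ^ n := by
  set M : MultilinearMap E (fun _ : Fin n => V) E :=
    (MultilinearMap.mkPiAlgebra E (Fin n) E).compLinearMap (fun _ => φ) with hM
  have hMsymm : ∀ (u : Fin n → V) (σ : Equiv.Perm (Fin n)),
      M (fun i => u (σ i)) = M u := by
    intro u σ
    simp only [hM, MultilinearMap.compLinearMap_apply, MultilinearMap.mkPiAlgebra_apply]
    exact Equiv.prod_comp σ (fun i => φ (u i))
  set F := PiTensorProduct.lift M with hF
  have hker : symRel E V n ≤ LinearMap.ker F := by
    rw [symRel, Submodule.span_le]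
    rintro x ⟨u, σ, rfl⟩
    simp only [SetLike.mem_coe, LinearMap.mem_ker, map_sub, hF,
      PiTensorProduct.lift.tprod, hMsymm u σ, sub_self]
  have hmem : PiTensorProduct.tprod E (fun _ : Fin n => v)
      - PiTensorProduct.tprod E (fun _ : Fin n => w) ∈ symRel E V n := by
    rw [symPowElem, symPowElem, Submodule.Quotient.eq] at h
    exact h
  have := hker hmem
  rw [LinearMap.mem_ker, map_sub, sub_eq_zero] at this
  simpa [hF, hM] using this

/-- If `v^{⊗n} = w^{⊗n}` in `Sym^n V` for nonzero `v, w`, then `v = ζ • w` for an `n`-th root of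
unity `ζ`. -/
theorem statement3 (hn : 1 ≤ n) [CharZero E] (v w : V) (hv : v ≠ 0) (hw : w ≠ 0)
    (h : symPowElem E V n v = symPowElem E V n w) :
    ∃ ζ : E, ζ ^ n = 1 ∧ v = ζ • w := by
  -- first: v ∈ span {w}
  have hvw : v ∈ Submodule.span E {w} := by
    by_contra hx
    obtain ⟨f, hf1, hf2⟩ := (Submodule.span E {w}).exists_dual_map_eq_bot_of_notMem hx inferInstance
    have hfw : f w = 0 := by
      have : f w ∈ (Submodule.span E {w}).map f :=
        ⟨w, Submodule.mem_span_singleton_self w, rfl⟩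
      rwa [hf2, Submodule.mem_bot] at this
    have := key h f
    rw [hfw, zero_pow (by omega)] at this
    exact hf1 (pow_eq_zero_iff (by omega) |>.mp this)
  obtain ⟨c, rfl⟩ := Submodule.mem_span_singleton.mp hvw
  refine ⟨c, ?_, rfl⟩
  obtain ⟨f, hf1, -⟩ := (⊥ : Submodule E V).exists_dual_map_eq_bot_of_notMem
    (by simpa using hw) inferInstance
  have := key h f
  rw [map_smul, smul_eq_mul, mul_pow] at this
  field_simp at this
  exact this
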